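/- arXiv:2211.03999 — 4 statements merged into one kernel-verified Lean document; each statement's English description precedes it below -/
import Mathlib

section
/- Let P and Q be 2-qubit Pauli strings with P ≠ Q. Then the sum over all 16 2-qubit Pauli strings V of (V·P·V†) ⊗ (V·Q·V†) (Kronecker product of 4×4 matrices, giving a 16×16 complex matrix) equals the zero matrix. -/
/-! Conjugating a Pauli string `P` by a Pauli string `V` only multiplies it by a sign
`s_P(V) = ∏ j, pauliConjSign (V j) (P j)`, so the `V`-summand is `s_P(V) s_Q(V) • (P ⊗ₖ Q)`.
The sum of `s_P(V) s_Q(V)` over all `V` factors over the qubits. On a qubit where `P` and `Q`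
differ, `σ_p σ_q` is up to a phase a Pauli `σ_r ≠ I`, so the factor is
`∑ v, pauliConjSign v r`, which vanishes because exactly two of the four Paulis commute
with `σ_r`. -/

open Matrix Kronecker

/-- Labels for the four single-qubit Pauli matrices. -/
inductive PauliLabel : Type
  | I | X | Y | Z
  deriving DecidableEq

instance : Fintype PauliLabel :=
  ⟨{PauliLabel.I, PauliLabel.X, PauliLabel.Y, PauliLabel.Z}, fun x => by cases x <;> simp⟩

/-- The single-qubit Pauli matrices over `ℂ`. -/
noncomputable def pauliMat : PauliLabel → Matrix (Fin 2) (Fin 2) ℂ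
  | PauliLabel.I => !![1, 0; 0, 1]
  | PauliLabel.X => !![0, 1; 1, 0]
  | PauliLabel.Y => !![0, -Complex.I; Complex.I, 0]
  | PauliLabel.Z => !![1, 0; 0, -1]

/-- The 2-qubit Pauli string `σ_{a 0} ⊗ σ_{a 1}`, as a `4 × 4` matrix indexed by
`Fin 2 → Fin 2` (entries of a Kronecker product are products of entries). -/
noncomputable def pauliString (a : Fin 2 → PauliLabel) :
    Matrix (Fin 2 → Fin 2) (Fin 2 → Fin 2) ℂ :=
  Matrix.of fun x y => ∏ j, pauliMat (a j) (x j) (y j)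

/-- `σ_v σ_p σ_v† = pauliConjSign v p • σ_p`; the sign is `1` exactly when `σ_v` and `σ_p`
commute. -/
def pauliConjSign (v p : PauliLabel) : ℤ :=
  if v = PauliLabel.I ∨ p = PauliLabel.I ∨ v = p then 1 else -1

theorem pauliMat_conj (v p : PauliLabel) :
    pauliMat v * pauliMat p * (pauliMat v)ᴴ = (pauliConjSign v p : ℂ) • pauliMat p := by
  cases v <;> cases p <;>
    · ext i j
      fin_cases i <;> fin_cases j <;>
        simp [pauliMat, pauliConjSign, Matrix.mul_apply, Fin.sum_univ_two]

theorem sum_pauliConjSign_mul_eq_zero {p q : PauliLabel} (h : p ≠ q) :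
    ∑ v, pauliConjSign v p * pauliConjSign v q = 0 := by
  revert p q
  decide

namespace Matrix

variable {ι n R : Type*} [Fintype ι]

def piKronecker [CommMonoid R] (M : ι → Matrix n n R) : Matrix (ι → n) (ι → n) R :=
  of fun x y => ∏ j, M j (x j) (y j)

theorem piKronecker_mul [DecidableEq ι] [Fintype n] [CommSemiring R] (M N : ι → Matrix n n R) :
    piKronecker M * piKronecker N = piKronecker fun j => M j * N j := by
  ext x y
  simp only [piKronecker, mul_apply, of_apply, ← Finset.prod_mul_distrib]
  exact (Fintype.prod_sum fun j z => M j (x j) z * N j z (y j)).symm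

theorem piKronecker_conjTranspose [CommMonoid R] [StarMul R] (M : ι → Matrix n n R) :
    (piKronecker M)ᴴ = piKronecker fun j => (M j)ᴴ := by
  ext x y
  simp [piKronecker, conjTranspose_apply]

theorem piKronecker_smul [CommMonoid R] (c : ι → R) (M : ι → Matrix n n R) :
    (piKronecker fun j => c j • M j) = (∏ j, c j) • piKronecker M := by
  ext x y
  simp [piKronecker, Finset.prod_mul_distrib]

end Matrix

theorem pauliString_eq_piKronecker (a : Fin 2 → PauliLabel) :
    pauliString a = Matrix.piKronecker fun j => pauliMat (a j) :=
  rfl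

theorem pauliString_conj (V P : Fin 2 → PauliLabel) :
    pauliString V * pauliString P * (pauliString V)ᴴ
      = (∏ j, (pauliConjSign (V j) (P j) : ℂ)) • pauliString P := by
  simp only [pauliString_eq_piKronecker, piKronecker_conjTranspose, piKronecker_mul,
    pauliMat_conj, piKronecker_smul]

theorem sum_prod_pauliConjSign_mul_eq_zero {ι : Type*} [Fintype ι] [DecidableEq ι]
    {P Q : ι → PauliLabel} (hPQ : P ≠ Q) :
    ∑ V : ι → PauliLabel, ∏ j, pauliConjSign (V j) (P j) * pauliConjSign (V j) (Q j) = 0 := by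
  obtain ⟨j, hj⟩ := Function.ne_iff.mp hPQ
  rw [← Fintype.prod_sum fun j v => pauliConjSign v (P j) * pauliConjSign v (Q j)]
  exact Finset.prod_eq_zero (Finset.mem_univ j) (sum_pauliConjSign_mul_eq_zero hj)

/-- For 2-qubit Pauli strings `P ≠ Q`, the sum over all sixteen 2-qubit Pauli strings `V` of
`(V·P·V†) ⊗ (V·Q·V†)` (Kronecker product of `4×4` matrices) is the zero `16×16` matrix. -/
theorem pauli_conjugation_sum_eq_zero (P Q : Fin 2 → PauliLabel) (hPQ : P ≠ Q) :
    ∑ V : Fin 2 → PauliLabel,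
      (pauliString V * pauliString P * (pauliString V)ᴴ) ⊗ₖ
        (pauliString V * pauliString Q * (pauliString V)ᴴ) = 0 := by
  simp only [pauliString_conj, smul_kronecker, kronecker_smul, smul_smul,
    ← Finset.prod_mul_distrib, ← Finset.sum_smul]
  have hsum := congrArg (Int.cast : ℤ → ℂ) (sum_prod_pauliConjSign_mul_eq_zero hPQ.symm)
  push_cast at hsum
  rw [hsum, zero_smul]
end

section
/- (Gate-set orthogonality.) Let μ be a probability measure on the unitary group U(4) = Matrix.unitaryGroup (Fin 4) ℂ that is invariant under right multiplication by a uniformly random 2-qubit Pauli, i.e., μ equals the average over the 16 2-qubit Pauli strings V of the pushforward of μ under the map U ↦ U·V. Then for any 2-qubit Pauli strings P ≠ Q, the (entrywise) integral ∫ (U·P·U†) ⊗ (U·Q·U†) dμ(U) equals the zero 16×16 matrix. -/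
open Matrix MeasureTheory

/-- The Kronecker product of two `2×2` complex matrices, written out as a `4×4` matrix
(rows/columns ordered as `00, 01, 10, 11`). -/
noncomputable def kron2 (A B : Matrix (Fin 2) (Fin 2) ℂ) : Matrix (Fin 4) (Fin 4) ℂ :=
  !![A 0 0 * B 0 0, A 0 0 * B 0 1, A 0 1 * B 0 0, A 0 1 * B 0 1;
     A 0 0 * B 1 0, A 0 0 * B 1 1, A 0 1 * B 1 0, A 0 1 * B 1 1;
     A 1 0 * B 0 0, A 1 0 * B 0 1, A 1 1 * B 0 0, A 1 1 * B 0 1;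
     A 1 0 * B 1 0, A 1 0 * B 1 1, A 1 1 * B 1 0, A 1 1 * B 1 1]

/-- The 2-qubit Pauli string `σ_a ⊗ σ_b`, as a `4×4` complex matrix. -/
noncomputable def pauli2 (a b : PauliLabel) : Matrix (Fin 4) (Fin 4) ℂ :=
  kron2 (pauliMat a) (pauliMat b)

lemma kron2_mul (A B C D : Matrix (Fin 2) (Fin 2) ℂ) :
    kron2 A B * kron2 C D = kron2 (A * C) (B * D) := by
  ext i j
  fin_cases i <;> fin_cases j <;>
    simp [kron2, Matrix.mul_apply, Fin.sum_univ_four, Fin.sum_univ_two] <;> ring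

lemma kron2_star (A B : Matrix (Fin 2) (Fin 2) ℂ) :
    star (kron2 A B) = kron2 (star A) (star B) := by
  ext i j
  fin_cases i <;> fin_cases j <;>
    simp [kron2, Matrix.star_eq_conjTranspose, Matrix.conjTranspose_apply]

lemma kron2_one : kron2 1 1 = 1 := by
  ext i j
  fin_cases i <;> fin_cases j <;>
    simp [kron2, Matrix.one_apply, Matrix.vecHead, Matrix.vecTail]

lemma pauliMat_mul_star (a : PauliLabel) : pauliMat a * star (pauliMat a) = 1 := by
  cases a <;>
    · ext i j
      fin_cases i <;> fin_cases j <;>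
        simp [pauliMat, Matrix.mul_apply, Fin.sum_univ_two, Matrix.one_apply,
          Matrix.star_eq_conjTranspose, Matrix.conjTranspose_apply]

/-- Every 2-qubit Pauli string is a unitary `4×4` matrix. -/
lemma pauli2_mem_unitaryGroup (a b : PauliLabel) :
    pauli2 a b ∈ Matrix.unitaryGroup (Fin 4) ℂ := by
  rw [Matrix.mem_unitaryGroup_iff, pauli2, kron2_star, kron2_mul,
    pauliMat_mul_star, pauliMat_mul_star, kron2_one]

/-- The 2-qubit Pauli string `σ_a ⊗ σ_b` as an element of the unitary group `U(4)`. -/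
noncomputable def pauli2U (a b : PauliLabel) : Matrix.unitaryGroup (Fin 4) ℂ :=
  ⟨pauli2 a b, pauli2_mem_unitaryGroup a b⟩

/-! Right multiplication of `U` by a Pauli string `V` rescales `U P U† ⊗ U Q U†` by
`χ_V(P) χ_V(Q)`, where `χ_V(P) = ±1` according as `V` and `P` commute or anticommute. By the
invariance of `μ`, the integral equals `(1/16) ∑_V χ_V(P) χ_V(Q)` times itself, and this
coefficient vanishes for `P ≠ Q`: the `χ_·(P)` are distinct characters of the Pauli group
modulo phases, hence orthogonal. -/

namespace MeasureTheory

theorem integral_eq_zero_of_eq_smul_sum_map {α E ι : Type*} [MeasurableSpace α]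
    [NormedAddCommGroup E] [NormedSpace ℝ E] [Fintype ι] {μ : Measure α} {c : ENNReal}
    {φ : ι → α → α} {f : α → E} {w : ι → ℝ}
    (hμ : μ = c • ∑ i, μ.map (φ i)) (hφ : ∀ i, Measurable (φ i))
    (hf : StronglyMeasurable f)
    (hfφ : ∀ i x, f (φ i x) = w i • f x) (hw : ∑ i, w i = 0) :
    ∫ x, f x ∂μ = 0 := by
  by_cases hint : Integrable f μ
  swap
  · exact integral_undef hint
  have hcomp : ∀ i, f ∘ φ i = fun x => w i • f x := fun i => funext (hfφ i)
  have hint_map : ∀ i, Integrable f (μ.map (φ i)) := fun i => by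
    rw [integrable_map_measure hf.aestronglyMeasurable (hφ i).aemeasurable, hcomp]
    exact hint.smul (w i)
  have hintegral_map : ∀ i, ∫ x, f x ∂(μ.map (φ i)) = w i • ∫ x, f x ∂μ := fun i => by
    rw [integral_map_of_stronglyMeasurable (hφ i) hf]
    simp only [hfφ, integral_smul]
  calc ∫ x, f x ∂μ = c.toReal • ∑ i, ∫ x, f x ∂(μ.map (φ i)) := by
        conv_lhs => rw [hμ]
        rw [integral_smul_measure, integral_finsetSum_measure fun i _ => hint_map i]
    _ = 0 := by simp only [hintegral_map, ← Finset.sum_smul, hw, zero_smul, smul_zero]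

end MeasureTheory

section Conjugation

open Kronecker

variable {n R α : Type*} [Fintype n] [CommSemiring α] [StarRing α] [Monoid R]
  [DistribMulAction R α] [IsScalarTower R α α] [SMulCommClass R α α]

theorem Matrix.mul_mul_conjTranspose_of_conj_eq_smul {U V A : Matrix n n α} {s : R}
    (h : V * A * Vᴴ = s • A) : U * V * A * (U * V)ᴴ = s • (U * A * Uᴴ) := by
  rw [conjTranspose_mul, ← Matrix.smul_mul, ← Matrix.mul_smul, ← h]
  simp only [Matrix.mul_assoc]

theorem Matrix.kronecker_conj_mul_of_conj_eq_smul {U V A B : Matrix n n α} {s t : R}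
    (hA : V * A * Vᴴ = s • A) (hB : V * B * Vᴴ = t • B) :
    (U * V * A * (U * V)ᴴ) ⊗ₖ (U * V * B * (U * V)ᴴ)
      = (s * t) • ((U * A * Uᴴ) ⊗ₖ (U * B * Uᴴ)) := by
  rw [mul_mul_conjTranspose_of_conj_eq_smul hA, mul_mul_conjTranspose_of_conj_eq_smul hB,
    smul_kronecker, kronecker_smul, smul_smul]

end Conjugation

def pauliCommSign : PauliLabel → PauliLabel → ℝ
  | .I, _ | _, .I | .X, .X | .Y, .Y | .Z, .Z => 1
  | _, _ => -1

theorem pauliMat_conj_s2 (a b : PauliLabel) :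
    pauliMat a * pauliMat b * (pauliMat a)ᴴ = pauliCommSign a b • pauliMat b := by
  cases a <;> cases b <;>
    · ext i j
      fin_cases i <;> fin_cases j <;>
        simp [pauliMat, pauliCommSign, Matrix.mul_apply, Fin.sum_univ_two]

theorem sum_pauliCommSign_mul_eq_zero {b c : PauliLabel} (h : b ≠ c) :
    ∑ a, pauliCommSign a b * pauliCommSign a c = 0 := by
  cases b <;> cases c <;> first
    | exact absurd rfl h
    | simp [Finset.univ, Fintype.elems, pauliCommSign]

theorem kron2_smul {R : Type*} [Monoid R] [MulAction R ℂ] [IsScalarTower R ℂ ℂ]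
    [SMulCommClass R ℂ ℂ] (s t : R) (A B : Matrix (Fin 2) (Fin 2) ℂ) :
    kron2 (s • A) (t • B) = (s * t) • kron2 A B := by
  ext i j
  fin_cases i <;> fin_cases j <;> simp [kron2, smul_mul_smul_comm, mul_smul]

def pauli2CommSign (v P : PauliLabel × PauliLabel) : ℝ :=
  pauliCommSign v.1 P.1 * pauliCommSign v.2 P.2

theorem pauli2_conj (v P : PauliLabel × PauliLabel) :
    pauli2 v.1 v.2 * pauli2 P.1 P.2 * (pauli2 v.1 v.2)ᴴ
      = pauli2CommSign v P • pauli2 P.1 P.2 := by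
  simp only [pauli2, ← star_eq_conjTranspose, kron2_star, kron2_mul]
  rw [star_eq_conjTranspose, star_eq_conjTranspose, pauliMat_conj_s2, pauliMat_conj_s2, kron2_smul,
    pauli2CommSign]

theorem sum_pauli2CommSign_mul_eq_zero {P Q : PauliLabel × PauliLabel} (h : P ≠ Q) :
    ∑ v, pauli2CommSign v P * pauli2CommSign v Q = 0 := by
  have hfactor : ∑ v, pauli2CommSign v P * pauli2CommSign v Q
      = (∑ a, pauliCommSign a P.1 * pauliCommSign a Q.1)
        * ∑ b, pauliCommSign b P.2 * pauliCommSign b Q.2 := by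
    rw [Finset.sum_mul_sum, ← Finset.sum_product']
    exact Finset.sum_congr rfl fun v _ => by simp only [pauli2CommSign]; ring
  rw [Ne, Prod.ext_iff, not_and_or] at h
  rw [hfactor, mul_eq_zero]
  exact h.imp sum_pauliCommSign_mul_eq_zero sum_pauliCommSign_mul_eq_zero

open Kronecker in
theorem gateset_orthogonality_general
    [MeasurableSpace (Matrix.unitaryGroup (Fin 4) ℂ)]
    [BorelSpace (Matrix.unitaryGroup (Fin 4) ℂ)]
    (μ : Measure (Matrix.unitaryGroup (Fin 4) ℂ))
    (hinv : μ = (16 : ENNReal)⁻¹ •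
      ∑ v : PauliLabel × PauliLabel,
        Measure.map (fun U : Matrix.unitaryGroup (Fin 4) ℂ => U * pauli2U v.1 v.2) μ)
    (P Q : PauliLabel × PauliLabel) (hPQ : P ≠ Q) :
    ∀ ij kl : Fin 4 × Fin 4,
      (∫ U : Matrix.unitaryGroup (Fin 4) ℂ,
        (((U : Matrix (Fin 4) (Fin 4) ℂ) * pauli2 P.1 P.2 * (U : Matrix (Fin 4) (Fin 4) ℂ)ᴴ) ⊗ₖ
          ((U : Matrix (Fin 4) (Fin 4) ℂ) * pauli2 Q.1 Q.2 * (U : Matrix (Fin 4) (Fin 4) ℂ)ᴴ))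
          ij kl ∂μ) = 0 := by
  intro ij kl
  refine integral_eq_zero_of_eq_smul_sum_map hinv (fun v => (continuous_mul_const _).measurable)
    (Continuous.stronglyMeasurable (by simp only [kroneckerMap_apply]; fun_prop)) (fun v U => ?_)
    (sum_pauli2CommSign_mul_eq_zero hPQ)
  rw [Submonoid.coe_mul, pauli2U,
    Matrix.kronecker_conj_mul_of_conj_eq_smul (pauli2_conj v P) (pauli2_conj v Q),
    Matrix.smul_apply]

open Kronecker in
/-- Gate-set orthogonality: if a probability measure `μ` on `U(4)` is invariant under right
multiplication by a uniformly random 2-qubit Pauli, then for any 2-qubit Pauli strings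
`P ≠ Q`, the entrywise integral `∫ (U·P·U†) ⊗ (U·Q·U†) dμ(U)` is the zero `16×16` matrix. -/
theorem gateset_orthogonality
    [MeasurableSpace (Matrix.unitaryGroup (Fin 4) ℂ)]
    [BorelSpace (Matrix.unitaryGroup (Fin 4) ℂ)]
    (μ : Measure (Matrix.unitaryGroup (Fin 4) ℂ)) [IsProbabilityMeasure μ]
    (hinv : μ = (16 : ENNReal)⁻¹ •
      ∑ v : PauliLabel × PauliLabel,
        Measure.map (fun U : Matrix.unitaryGroup (Fin 4) ℂ => U * pauli2U v.1 v.2) μ)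
    (P Q : PauliLabel × PauliLabel) (hPQ : P ≠ Q) :
    ∀ ij kl : Fin 4 × Fin 4,
      (∫ U : Matrix.unitaryGroup (Fin 4) ℂ,
        (((U : Matrix (Fin 4) (Fin 4) ℂ) * pauli2 P.1 P.2 * (U : Matrix (Fin 4) (Fin 4) ℂ)ᴴ) ⊗ₖ
          ((U : Matrix (Fin 4) (Fin 4) ℂ) * pauli2 Q.1 Q.2 * (U : Matrix (Fin 4) (Fin 4) ℂ)ᴴ))
          ij kl ∂μ) = 0 :=
  gateset_orthogonality_general μ hinv P Q hPQ
end

section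
/- (Active-gate count versus Hamming weight.) Fix a circuit architecture of depth d on n qubits and let s = (s_0, …, s_d) be a legal Pauli path. Define G(s) to be the number of pairs (i, g) where i ∈ {1,…,d} and g = {j, M_i(j)} is a gate of layer i such that (s_{i−1}(j), s_{i−1}(M_i(j))) ≠ (I, I). Then G(s) ≤ |s| and |s| ≤ 4 · G(s). -/
/-- A circuit architecture of depth `d` on `n` qubits: each layer `i ∈ {1,…,d}` is a
fixed-point-free involution `M i` of the qubit set (a perfect matching); the unordered pairs
`{j, M i j}` are the 2-qubit gates of layer `i`. -/
structure Architecture (n d : ℕ) where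
  M : Fin d → Fin n → Fin n
  involutive : ∀ i j, M i (M i j) = j
  fixedPointFree : ∀ i j, M i j ≠ j

/-- A Pauli path is a tuple `s = (s_0, …, s_d)` of layers, each assigning a Pauli label to
every qubit. -/
def PauliPath (n d : ℕ) : Type := Fin (d + 1) → Fin n → PauliLabel

/-- The Hamming weight of a Pauli path: the number of pairs `(i, j)` with `s i j ≠ I`. -/
def pathWeight {n d : ℕ} (s : PauliPath n d) : ℕ :=
  (Finset.univ.filter fun p : Fin (d + 1) × Fin n => s p.1 p.2 ≠ PauliLabel.I).card

/-- A Pauli path is legal if (1) for every layer `i ∈ {1,…,d}` and every gate `{j, M i j}`,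
the input pair `(s_{i−1} j, s_{i−1} (M i j))` is `(I, I)` iff the output pair
`(s_i j, s_i (M i j))` is `(I, I)`, and (2) `s_0` and `s_d` take values only in `{I, Z}`. -/
def IsLegal {n d : ℕ} (A : Architecture n d) (s : PauliPath n d) : Prop :=
  (∀ (i : Fin d) (j : Fin n),
      ((s i.castSucc j = PauliLabel.I ∧ s i.castSucc (A.M i j) = PauliLabel.I) ↔
        (s i.succ j = PauliLabel.I ∧ s i.succ (A.M i j) = PauliLabel.I))) ∧
  (∀ j, s 0 j = PauliLabel.I ∨ s 0 j = PauliLabel.Z) ∧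
  (∀ j, s (Fin.last d) j = PauliLabel.I ∨ s (Fin.last d) j = PauliLabel.Z)

/-- The number of active gates of a Pauli path: pairs `(i, g)` of a layer `i ∈ {1,…,d}` and a
gate `g = {j, M i j}` of layer `i` whose input pair `(s_{i−1} j, s_{i−1} (M i j))` is not
`(I, I)`.  Each gate is counted once, via its representative `j < M i j`. -/
def activeGates {n d : ℕ} (A : Architecture n d) (s : PauliPath n d) : ℕ :=
  (Finset.univ.filter fun p : Fin d × Fin n =>
    p.2 < A.M p.1 p.2 ∧
      ¬(s p.1.castSucc p.2 = PauliLabel.I ∧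
        s p.1.castSucc (A.M p.1 p.2) = PauliLabel.I)).card

/-!
The gates of a layer pair up the qubits, and a gate is active exactly when one of its two input
qubits carries a non-identity Pauli. Hence the active gates of layer `i` number between half
the weight of `s_{i-1}` and that weight; summing over the layers, `G(s)` is at most the weight
of `s_0, …, s_{d-1}`, which in turn is at most `2 G(s)`. Legality makes a gate active exactly
when its output pair is non-trivial, so the weight of `s_d` is at most twice the number of
active gates of the last layer, and `|s| ≤ 4 G(s)` follows.
-/

open Finset

section Involution

variable {α : Type*} [LinearOrder α] {σ : α → α}

/-- A `σ`-invariant set splits into the pairs `{a, σ a}`, each counted once by its smaller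
element. -/
theorem card_eq_two_mul_card_filter_lt (hσ : Function.Involutive σ) (hfix : ∀ a, σ a ≠ a)
    {S : Finset α} (hS : ∀ a, σ a ∈ S ↔ a ∈ S) :
    #S = 2 * #(S.filter fun a => a < σ a) := by
  have hswap : #(S.filter fun a => ¬a < σ a) = #(S.filter fun a => a < σ a) := by
    refine card_nbij' σ σ ?_ ?_ (fun a _ => hσ a) (fun a _ => hσ a)
    · intro a ha
      simp only [coe_filter, Set.mem_ofPred, not_lt] at ha ⊢
      rw [hσ a]
      exact ⟨(hS a).2 ha.1, lt_of_le_of_ne ha.2 (hfix a)⟩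
    · intro a ha
      simp only [coe_filter, Set.mem_ofPred, not_lt] at ha ⊢
      rw [hσ a]
      exact ⟨(hS a).2 ha.1, ha.2.le⟩
  rw [← card_filter_add_card_filter_not (fun a => a < σ a), hswap, two_mul]

variable [Fintype α] (Q : α → Prop) [DecidablePred Q]

theorem card_filter_not_and_eq (hσ : Function.Involutive σ) (hfix : ∀ a, σ a ≠ a) :
    #{a | ¬(Q a ∧ Q (σ a))} = 2 * #{a | a < σ a ∧ ¬(Q a ∧ Q (σ a))} := by
  rw [card_eq_two_mul_card_filter_lt hσ hfix, filter_filter]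
  · simp only [and_comm]
  · intro a
    simp only [mem_filter, mem_univ, true_and, hσ a, and_comm]

theorem card_filter_not_le_two_mul (hσ : Function.Involutive σ) (hfix : ∀ a, σ a ≠ a) :
    #{a | ¬Q a} ≤ 2 * #{a | a < σ a ∧ ¬(Q a ∧ Q (σ a))} := by
  rw [← card_filter_not_and_eq Q hσ hfix]
  exact card_le_card (monotone_filter_right _ fun _ _ ha h => ha h.1)

theorem card_filter_lt_le_card_filter_not (hσ : Function.Involutive σ) (hfix : ∀ a, σ a ≠ a) :
    #{a | a < σ a ∧ ¬(Q a ∧ Q (σ a))} ≤ #{a | ¬Q a} := by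
  have hcover : ({a | ¬(Q a ∧ Q (σ a))} : Finset α) ⊆
      ({a | ¬Q a} : Finset α) ∪ ({a | ¬Q a} : Finset α).image σ := by
    intro a ha
    simp only [mem_filter, mem_univ, true_and, not_and_or] at ha
    rcases ha with ha | ha
    · exact mem_union_left _ (by simpa using ha)
    · exact mem_union_right _ (mem_image.2 ⟨σ a, by simpa using ha, hσ a⟩)
  have hle : 2 * #{a | a < σ a ∧ ¬(Q a ∧ Q (σ a))} ≤ 2 * #{a | ¬Q a} :=
    calc 2 * #{a | a < σ a ∧ ¬(Q a ∧ Q (σ a))}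
        = #{a | ¬(Q a ∧ Q (σ a))} := (card_filter_not_and_eq Q hσ hfix).symm
      _ ≤ #{a | ¬Q a} + #(({a | ¬Q a} : Finset α).image σ) :=
        (card_le_card hcover).trans (card_union_le _ _)
      _ ≤ 2 * #{a | ¬Q a} := by rw [two_mul]; exact Nat.add_le_add_left card_image_le _
  omega

end Involution

namespace PauliPath

variable {n d : ℕ}

def layerWeight (s : PauliPath n d) (t : Fin (d + 1)) : ℕ :=
  #{j | s t j ≠ PauliLabel.I}

theorem pathWeight_eq_sum_layerWeight (s : PauliPath n d) :
    pathWeight s = ∑ t, s.layerWeight t := by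
  simp only [pathWeight, layerWeight, card_filter, Fintype.sum_prod_type]

end PauliPath

namespace Architecture

variable {n d : ℕ} (A : Architecture n d) (s : PauliPath n d)

def activeGatesAt (i : Fin d) : ℕ :=
  #{j | j < A.M i j ∧ ¬(s i.castSucc j = PauliLabel.I ∧ s i.castSucc (A.M i j) = PauliLabel.I)}

theorem activeGates_eq_sum_activeGatesAt : activeGates A s = ∑ i, A.activeGatesAt s i := by
  simp only [activeGates, activeGatesAt, card_filter, Fintype.sum_prod_type]

theorem activeGatesAt_le_layerWeight_castSucc (i : Fin d) :
    A.activeGatesAt s i ≤ s.layerWeight i.castSucc :=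
  card_filter_lt_le_card_filter_not _ (A.involutive i) (A.fixedPointFree i)

theorem layerWeight_castSucc_le (i : Fin d) :
    s.layerWeight i.castSucc ≤ 2 * A.activeGatesAt s i :=
  card_filter_not_le_two_mul _ (A.involutive i) (A.fixedPointFree i)

theorem layerWeight_succ_le {s : PauliPath n d} (hs : IsLegal A s) (i : Fin d) :
    s.layerWeight i.succ ≤ 2 * A.activeGatesAt s i := by
  have hactive : A.activeGatesAt s i = #{j | j < A.M i j ∧
      ¬(s i.succ j = PauliLabel.I ∧ s i.succ (A.M i j) = PauliLabel.I)} := by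
    simp only [activeGatesAt, hs.1 i]
  rw [hactive]
  exact card_filter_not_le_two_mul _ (A.involutive i) (A.fixedPointFree i)

end Architecture

theorem active_gates_vs_weight_general (n d : ℕ) (hd : 1 ≤ d)
    (A : Architecture n d) (s : PauliPath n d) (hs : IsLegal A s) :
    activeGates A s ≤ pathWeight s ∧ pathWeight s ≤ 4 * activeGates A s := by
  obtain ⟨k, rfl⟩ : ∃ k, d = k + 1 := ⟨d - 1, by omega⟩
  rw [A.activeGates_eq_sum_activeGatesAt, s.pathWeight_eq_sum_layerWeight,
    Fin.sum_univ_castSucc (f := s.layerWeight)]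
  have hactive_le : ∑ i, A.activeGatesAt s i ≤ ∑ i : Fin (k + 1), s.layerWeight i.castSucc :=
    sum_le_sum fun i _ => A.activeGatesAt_le_layerWeight_castSucc s i
  have hprefix_le : ∑ i : Fin (k + 1), s.layerWeight i.castSucc ≤ 2 * ∑ i, A.activeGatesAt s i := by
    rw [mul_sum]
    exact sum_le_sum fun i _ => A.layerWeight_castSucc_le s i
  have hlast : s.layerWeight (Fin.last (k + 1)) ≤ 2 * ∑ i, A.activeGatesAt s i := by
    rw [← Fin.succ_last]
    exact (A.layerWeight_succ_le hs _).trans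
      (Nat.mul_le_mul_left 2 (single_le_sum (fun i _ => Nat.zero_le _) (mem_univ _)))
  omega

/-- For a legal Pauli path, the number of active gates `G(s)` satisfies
`G(s) ≤ |s|` and `|s| ≤ 4 · G(s)`. -/
theorem active_gates_vs_weight (n d : ℕ) (hn : Even n) (hn0 : 0 < n) (hd : 1 ≤ d)
    (A : Architecture n d) (s : PauliPath n d) (hs : IsLegal A s) :
    activeGates A s ≤ pathWeight s ∧ pathWeight s ≤ 4 * activeGates A s :=
  active_gates_vs_weight_general n d hd A s hs
end

section
/- (Commutation of Z rotations through fSim gates.) For all real θ1, θ2, ω1, ω2, ω3, one has (R_Z(θ1) ⊗ R_Z(θ2)) · fSim(ω1, ω2, ω3) = fSim(ω1, ω2, ω3) · (R_Z(θ2) ⊗ R_Z(θ1)), where ⊗ denotes the Kronecker product of 2×2 complex matrices. -/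
open Matrix

/-- `R_Z(θ) = diag(e^{−iθ/2}, e^{iθ/2})`. -/
noncomputable def RZ (θ : ℝ) : Matrix (Fin 2) (Fin 2) ℂ :=
  !![Complex.exp (-(Complex.I * θ) / 2), 0; 0, Complex.exp (Complex.I * θ / 2)]

/-- The `fSim(ω₁, ω₂, ω₃)` gate. -/
noncomputable def fSim (ω1 ω2 ω3 : ℝ) : Matrix (Fin 4) (Fin 4) ℂ :=
  !![1, 0,                          0,                          0;
     0, 0,                          Complex.exp (-(Complex.I * ω1)), 0;
     0, Complex.exp (-(Complex.I * ω2)), 0,                          0;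
     0, 0,                          0,                          Complex.exp (-(Complex.I * ω3))]

/-- `(R_Z(θ₁) ⊗ R_Z(θ₂)) · fSim(ω₁,ω₂,ω₃) = fSim(ω₁,ω₂,ω₃) · (R_Z(θ₂) ⊗ R_Z(θ₁))`. -/
theorem rz_kron_rz_comm_fSim (θ1 θ2 ω1 ω2 ω3 : ℝ) :
    kron2 (RZ θ1) (RZ θ2) * fSim ω1 ω2 ω3 = fSim ω1 ω2 ω3 * kron2 (RZ θ2) (RZ θ1) := by
  unfold kron2 RZ fSim
  ext i j
  fin_cases i <;> fin_cases j <;>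
    simp [Matrix.mul_apply, Fin.sum_univ_four, ← Complex.exp_add, Matrix.vecHead, Matrix.vecTail] <;> ring_nf
end
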